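/- arXiv:math-ph/0302011 — 3 statements merged into one kernel-verified Lean document; each statement's English description precedes it below -/
import Mathlib

section
/- Let λ = (n₁ > ⋯ > n_k > 0) be a strict partition with double λ̃ = (n₁,…,n_k | n₁−1,…,n_k−1), and let ρ : ℤ → ℂ with r(n) = ρ(−n)ρ(n−1). Then r_λ := ∏_{i=1}^k r(1)r(2)⋯r(n_i) equals ρ^{KP}_{λ̃}(0) := ∏_{(i,j) ∈ λ̃} ρ(j−i), the product of ρ over the contents of the cells of the Young diagram of λ̃. -/
/-- The cells of the `i`-th "hook" of the Young diagram of the double `λ̃` of a strict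
partition `λ`: the diagonal node `(i,i)`, the `n_i − 1` nodes following it in its row,
and the `n_i` nodes following it in its column (so that the `i`-th diagonal hook
consists of `2 n_i` cells, as for `λ̃ = (n | n−1)` in Frobenius notation). -/
def hookCells (k : ℕ) (n : Fin k → ℕ) (i : Fin k) : Finset (ℕ × ℕ) :=
  {((i : ℕ), (i : ℕ))}
    ∪ (Finset.range (n i - 1)).image (fun m => ((i : ℕ), (i : ℕ) + m + 1))
    ∪ (Finset.range (n i)).image (fun m => ((i : ℕ) + m + 1, (i : ℕ)))

/-- The set of cells of the Young diagram of the double `λ̃`. -/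
def doubleCells (k : ℕ) (n : Fin k → ℕ) : Finset (ℕ × ℕ) :=
  Finset.univ.biUnion (hookCells k n)

/-!
The diagram of `λ̃` is the disjoint union of its diagonal hooks `(n_i | n_i - 1)`, and the
`i`-th hook has contents `0, 1, …, n_i - 1` in its arm and `-1, …, -n_i` in its leg. Pairing the
content `m` with `-(m + 1)` turns the product over the hook into `∏_{m < n_i} r(m + 1)`.
-/

open Finset

/-- `min c.1 c.2` identifies the hook containing `c`, so distinct hooks are disjoint. -/
lemma min_eq_of_mem_hookCells {k : ℕ} {n : Fin k → ℕ} {i : Fin k} {c : ℕ × ℕ}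
    (hc : c ∈ hookCells k n i) : min c.1 c.2 = i := by
  simp only [hookCells, mem_union, mem_singleton, mem_image, mem_range] at hc
  rcases hc with (rfl | ⟨m, -, rfl⟩) | ⟨m, -, rfl⟩ <;> simp <;> omega

lemma pairwiseDisjoint_hookCells (k : ℕ) (n : Fin k → ℕ) :
    (↑(univ : Finset (Fin k)) : Set (Fin k)).PairwiseDisjoint (hookCells k n) := by
  intro i _ j _ hij
  refine disjoint_left.mpr fun c hci hcj => hij ?_
  exact Fin.ext ((min_eq_of_mem_hookCells hci).symm.trans (min_eq_of_mem_hookCells hcj))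

lemma prod_hookCells_content {M : Type*} [CommMonoid M] (k : ℕ) (n : Fin k → ℕ) (i : Fin k)
    (f : ℤ → M) :
    ∏ c ∈ hookCells k n i, f ((c.2 : ℤ) - c.1)
      = f 0 * (∏ m ∈ range (n i - 1), f (m + 1)) * ∏ m ∈ range (n i), f (-(m + 1)) := by
  have hdiag_arm : Disjoint {((i : ℕ), (i : ℕ))}
      ((range (n i - 1)).image fun m => ((i : ℕ), (i : ℕ) + m + 1)) := by
    simp only [disjoint_singleton_left, mem_image, mem_range, Prod.mk.injEq, not_exists]
    omega
  have hleg : Disjoint ({((i : ℕ), (i : ℕ))}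
      ∪ (range (n i - 1)).image fun m => ((i : ℕ), (i : ℕ) + m + 1))
      ((range (n i)).image fun m => ((i : ℕ) + m + 1, (i : ℕ))) := by
    simp only [disjoint_left, mem_union, mem_singleton, mem_image, mem_range]
    rintro _ (rfl | ⟨m, -, rfl⟩) ⟨m', -, h⟩ <;> simp only [Prod.mk.injEq] at h <;> omega
  rw [hookCells, prod_union hleg, prod_union hdiag_arm, prod_singleton,
    prod_image (by intro _ _ _ _ h; simp only [Prod.mk.injEq] at h; omega),
    prod_image (by intro _ _ _ _ h; simp only [Prod.mk.injEq] at h; omega), sub_self]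
  congr 2
  · exact prod_congr rfl fun m _ => congr_arg f (by push_cast; ring)
  · exact funext fun m => congr_arg f (by push_cast; ring)

lemma prod_range_neg_succ_mul_eq {M : Type*} [CommMonoid M] {N : ℕ} (hN : 0 < N) (f : ℤ → M) :
    ∏ m ∈ range N, f (-(m + 1)) * f m
      = f 0 * (∏ m ∈ range (N - 1), f (m + 1)) * ∏ m ∈ range N, f (-(m + 1)) := by
  obtain ⟨N, rfl⟩ := Nat.exists_eq_add_one_of_ne_zero hN.ne'
  rw [prod_mul_distrib, Nat.add_sub_cancel, prod_range_succ' (fun m : ℕ => f m)]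
  push_cast
  ac_rfl

theorem r_lambda_eq_content_product_over_double_general (k : ℕ) (n : Fin k → ℕ)
    (hpos : ∀ i, 0 < n i)
    (ρ r : ℤ → ℂ) (hr : ∀ m : ℤ, r m = ρ (-m) * ρ (m - 1)) :
    (∏ i : Fin k, ∏ m ∈ Finset.range (n i), r (m + 1))
      = ∏ c ∈ doubleCells k n, ρ ((c.2 : ℤ) - (c.1 : ℤ)) := by
  rw [doubleCells, prod_biUnion (pairwiseDisjoint_hookCells k n)]
  refine prod_congr rfl fun i _ => ?_
  rw [prod_hookCells_content, ← prod_range_neg_succ_mul_eq (hpos i)]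
  exact prod_congr rfl fun m _ => by rw [hr, add_sub_cancel_right]

/-- For a strict partition `λ = (n₁ > ⋯ > n_k > 0)` and
`r(n) = ρ(−n)ρ(n−1)`, one has `r_λ = ρ^{KP}_{λ̃}(0) = ∏_{(i,j)∈λ̃} ρ(j−i)`, the product
of `ρ` over the contents of the cells of the Young diagram of the double `λ̃`. -/
theorem r_lambda_eq_content_product_over_double (k : ℕ) (n : Fin k → ℕ)
    (hanti : StrictAnti n) (hpos : ∀ i, 0 < n i)
    (ρ r : ℤ → ℂ) (hr : ∀ m : ℤ, r m = ρ (-m) * ρ (m - 1)) :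
    (∏ i : Fin k, ∏ m ∈ Finset.range (n i), r (m + 1))
      = ∏ c ∈ doubleCells k n, ρ ((c.2 : ℤ) - (c.1 : ℤ)) :=
  r_lambda_eq_content_product_over_double_general k n hpos ρ r hr
end

section
/- For a strict partition λ with parts n₁ > ⋯ > n_k > 0, the shifted hook length product H*_λ = (∏_{i=1}^k n_i!) · ∏_{i<j} (n_i + n_j)/(n_i − n_j) satisfies H*_λ = 2^{−k/2} √(H_{λ̃}), where H_{λ̃} is the product of hook lengths of the double partition λ̃ = (n₁,…,n_k | n₁−1,…,n_k−1). Equivalently, (H*_λ)² · 2^k = H_{λ̃}. -/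
/-!
Cut the diagram of `λ̃` along its `k × k` Durfee square. The hook of a cell `(i, j)` of the square
has length `nᵢ + nⱼ`; to the right of the square lies a partition with `β`-numbers `n₁, …, n_k`,
below it the conjugate of one with `β`-numbers `n₁ - 1, …, n_k - 1`, and the hooks of their cells
do not leave them. Frobenius' formula `H_ν ∏_{i<j} (βᵢ - βⱼ) = ∏ βᵢ!` then gives
`H_{λ̃} ∏_{i<j} (nᵢ - nⱼ)² = 2^k ∏ nᵢ ∏_{i<j} (nᵢ + nⱼ)² ∏ nᵢ! ∏ (nᵢ - 1)!`,
which is `2^k (∏ nᵢ! ∏_{i<j} (nᵢ + nⱼ))²`.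
Frobenius' formula holds row by row: the hook lengths of row `i` together with the `βᵢ - βⱼ`,
`j > i`, are exactly `1, …, βᵢ`.
-/

/-- Row lengths of the double `λ̃ = (n₁,…,n_k | n₁−1,…,n_k−1)` of a strict partition
(0-indexed): `μ_i = n_i + i + 1` for `i < k`, and `μ_i = #{j : n_j + j ≥ i+1}` below
the diagonal block. -/
def muD (k : ℕ) (n : Fin k → ℕ) (i : ℕ) : ℕ :=
  if h : i < k then n ⟨i, h⟩ + i + 1
  else (Finset.univ.filter fun j : Fin k => i + 1 ≤ n j + (j : ℕ)).card

/-- Column lengths of the double: `μ'_c = n_c + c` for `c < k`,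
and `μ'_c = #{j : n_j + j ≥ c}` beyond the diagonal block. -/
def muDc (k : ℕ) (n : Fin k → ℕ) (c : ℕ) : ℕ :=
  if h : c < k then n ⟨c, h⟩ + c
  else (Finset.univ.filter fun j : Fin k => c ≤ n j + (j : ℕ)).card

/-- `H_{λ̃}`: the product of the hook lengths `μ_i + μ'_j − i − j − 1` over all cells
`(i,j)` of the Young diagram of the double `λ̃`. -/
def hookProdDouble (k : ℕ) (n : Fin k → ℕ) : ℕ :=
  ∏ i ∈ Finset.range (muDc k n 0), ∏ j ∈ Finset.range (muD k n i),
    (muD k n i + muDc k n j - i - j - 1)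

/-- `H*_λ = (∏ᵢ nᵢ!) ∏_{i<j} (nᵢ+nⱼ)/(nᵢ−nⱼ)`, the product of the hook lengths of the
shifted diagram of the strict partition `λ`. -/
noncomputable def HstarQ (k : ℕ) (n : Fin k → ℕ) : ℚ :=
  (∏ i, ((n i).factorial : ℚ)) *
    ∏ p ∈ Finset.univ.filter (fun p : Fin k × Fin k => p.1 < p.2),
      (((n p.1 : ℚ) + (n p.2 : ℚ)) / ((n p.1 : ℚ) - (n p.2 : ℚ)))

open Finset
open scoped Nat

namespace Finset

variable {α M : Type*} [CommMonoid M] [Fintype α] [LinearOrder α]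

theorem prod_filter_fst_lt_snd [LocallyFiniteOrderTop α] (f : α × α → M) :
    ∏ p ∈ univ.filter (fun p : α × α => p.1 < p.2), f p = ∏ i, ∏ j ∈ Ioi i, f (i, j) := by
  rw [prod_sigma']
  exact prod_nbij' (fun p => ⟨p.1, p.2⟩) (fun s => (s.1, s.2)) (by simp) (by simp) (by simp)
    (by simp) (by simp)

theorem prod_prod_eq_prod_diag_mul_sq [LocallyFiniteOrderTop α] [LocallyFiniteOrderBot α]
    (g : α → α → M) (hg : ∀ i j, g i j = g j i) :
    ∏ i, ∏ j, g i j = (∏ i, g i i) * (∏ i, ∏ j ∈ Ioi i, g i j) ^ 2 := by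
  classical
  calc ∏ i, ∏ j, g i j = ∏ i, g i i * ∏ j ∈ {i}ᶜ, g j i := by
        simp_rw [hg _ (_ : α)]
        exact prod_congr rfl fun i _ => Fintype.prod_eq_mul_prod_compl i _
    _ = (∏ i, g i i) * ∏ i, ∏ j ∈ Ioi i, g j i * g i j := by
        rw [prod_mul_distrib, prod_prod_Ioi_mul_eq_prod_prod_off_diag]
    _ = _ := by
        simp_rw [hg _ (_ : α), ← sq, prod_pow]

theorem prod_id_eq_factorial_of_subset_Icc {s : Finset ℕ} {m : ℕ} (hs : s ⊆ Icc 1 m)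
    (hcard : m ≤ #s) : ∏ x ∈ s, x = m ! := by
  rw [eq_of_subset_of_card_le hs (by simpa using hcard), ← Ico_add_one_right_eq_Icc,
    prod_Ico_id_eq_factorial]

end Finset

namespace HookLength

variable {r : ℕ} (ν : Fin r → ℕ)

def colLen (c : ℕ) : ℕ := #{j | c < ν j}

def hook (i : Fin r) (c : ℕ) : ℕ := ν i + colLen ν c - i - c - 1

def hookProd : ℕ := ∏ i, ∏ c ∈ range (ν i), hook ν i c

/-- The `β`-numbers of `ν` viewed as a partition with exactly `r` (possibly empty) rows; they are
the first-column hook lengths when all rows are nonempty. -/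
def betaNum (i : Fin r) : ℕ := ν i + (r - 1 - i)

variable {ν}

theorem colLen_le_card (c : ℕ) : colLen ν c ≤ r :=
  (card_filter_le _ _).trans_eq (card_fin r)

theorem colLen_antitone : Antitone (colLen ν) :=
  fun _ _ hab => card_le_card fun j => by
    simp only [mem_filter, mem_univ, true_and]
    omega

theorem lt_colLen_iff (hν : Antitone ν) {i : Fin r} {c : ℕ} : (i : ℕ) < colLen ν c ↔ c < ν i := by
  constructor
  · intro hi
    by_contra! hc
    have hsub : (univ.filter fun j => c < ν j) ⊆ Iio i := fun j hj => by
      simp only [mem_filter, mem_univ, true_and] at hj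
      exact mem_Iio.2 <| lt_of_not_ge fun hij => (hν hij).not_gt (hc.trans_lt hj)
    have := card_le_card hsub
    rw [Fin.card_Iio] at this
    exact (hi.trans_le this).false
  · intro hc
    have hsub : Iic i ⊆ univ.filter fun j => c < ν j := fun j hj => by
      simpa using hc.trans_le (hν (mem_Iic.1 hj))
    simpa [Fin.card_Iic, colLen] using card_le_card hsub

theorem hook_mem_Icc (hν : Antitone ν) {i : Fin r} {c : ℕ} (hc : c < ν i) :
    hook ν i c ∈ Icc 1 (betaNum ν i) := by
  have := (lt_colLen_iff hν).2 hc
  have := colLen_le_card (ν := ν) c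
  simp only [mem_Icc, hook, betaNum]
  omega

theorem hook_strictAntiOn (hν : Antitone ν) (i : Fin r) :
    StrictAntiOn (hook ν i) (range (ν i)) := by
  intro c _ c' hc' hlt
  have hc'ν := mem_range.1 hc'
  have := (lt_colLen_iff hν).2 hc'ν
  have := colLen_antitone (ν := ν) hlt.le
  simp only [hook]
  omega

theorem betaNum_strictAnti (hν : Antitone ν) : StrictAnti (betaNum ν) := by
  intro i j hij
  have := hν hij.le
  have := j.isLt
  have : (i : ℕ) < j := hij
  simp only [betaNum]
  omega

/-- The hook of `(i, c)` is longer than `βᵢ - βⱼ` if row `j` reaches column `c`, and shorter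
otherwise. -/
theorem hook_ne_betaNum_sub (hν : Antitone ν) {i j : Fin r} (hij : i < j) {c : ℕ} (hc : c < ν i) :
    hook ν i c ≠ betaNum ν i - betaNum ν j := by
  have := hν hij.le
  have := j.isLt
  have : (i : ℕ) < j := hij
  have := (lt_colLen_iff hν).2 hc
  have hj := lt_colLen_iff hν (i := j) (c := c)
  simp only [hook, betaNum]
  omega

theorem prod_hook_mul_prod_betaNum_sub (hν : Antitone ν) (i : Fin r) :
    (∏ c ∈ range (ν i), hook ν i c) * ∏ j ∈ Ioi i, (betaNum ν i - betaNum ν j) =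
      (betaNum ν i)! := by
  classical
  have hinj : Set.InjOn (fun j => betaNum ν i - betaNum ν j) (Ioi i) := fun j hj j' hj' h => by
    have := betaNum_strictAnti hν (mem_Ioi.1 hj)
    have := betaNum_strictAnti hν (mem_Ioi.1 hj')
    exact (betaNum_strictAnti hν).injective (by simp only at h; omega)
  have hdisj : Disjoint ((range (ν i)).image (hook ν i))
      ((Ioi i).image fun j => betaNum ν i - betaNum ν j) := by
    simp only [disjoint_left, mem_image, mem_range, mem_Ioi, not_exists, not_and]
    rintro _ ⟨c, hc, rfl⟩ j hij h
    exact hook_ne_betaNum_sub hν hij hc h.symm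
  calc _ = ∏ x ∈ (range (ν i)).image (hook ν i) ∪
          (Ioi i).image (fun j => betaNum ν i - betaNum ν j), x := by
        rw [prod_union hdisj, prod_image (hook_strictAntiOn hν i).injOn, prod_image hinj]
    _ = _ := prod_id_eq_factorial_of_subset_Icc ?_ ?_
  · refine union_subset (image_subset_iff.2 fun c hc => hook_mem_Icc hν (mem_range.1 hc))
      (image_subset_iff.2 fun j hj => ?_)
    have := betaNum_strictAnti hν (mem_Ioi.1 hj)
    simp only [mem_Icc]
    omega
  · rw [card_union_of_disjoint hdisj, card_image_of_injOn (hook_strictAntiOn hν i).injOn,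
      card_image_of_injOn hinj, card_range, Fin.card_Ioi, betaNum]

theorem hookProd_mul_prod_betaNum_sub (hν : Antitone ν) :
    hookProd ν * ∏ i, ∏ j ∈ Ioi i, (betaNum ν i - betaNum ν j) = ∏ i, (betaNum ν i)! := by
  rw [hookProd, ← prod_mul_distrib]
  exact prod_congr rfl fun i _ => prod_hook_mul_prod_betaNum_sub hν i

theorem prod_prod_range_colLen {M : Type*} [CommMonoid M] (hν : Antitone ν) {m : ℕ}
    (hm : ∀ j, ν j ≤ m) (G : ℕ → ℕ → M) :
    ∏ t ∈ range m, ∏ j ∈ range (colLen ν t), G t j = ∏ j, ∏ t ∈ range (ν j), G t j := by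
  have hcol : ∀ t, (univ.filter fun j => t < ν j).map Fin.valEmbedding = range (colLen ν t) := by
    intro t
    ext x
    simp only [mem_map, mem_filter, mem_univ, true_and, Fin.valEmbedding_apply, mem_range]
    constructor
    · rintro ⟨j, hj, rfl⟩
      exact (lt_colLen_iff hν).2 hj
    · intro hx
      have := colLen_le_card (ν := ν) t
      exact ⟨⟨x, by omega⟩, (lt_colLen_iff hν).1 hx, rfl⟩
  symm
  rw [prod_comm' (t' := range m) (s' := fun t => univ.filter fun j => t < ν j)]
  · exact prod_congr rfl fun t _ => by rw [← hcol, prod_map]; rfl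
  · intro j t
    simp only [mem_univ, mem_range, mem_filter, true_and]
    exact ⟨fun h => ⟨h, h.trans_le (hm j)⟩, And.left⟩

end HookLength

open HookLength

section Double

variable {k : ℕ} {n : Fin k → ℕ}

theorem muD_val (i : Fin k) : muD k n i = n i + i + 1 := by simp [muD]

theorem muDc_val (i : Fin k) : muDc k n i = n i + i := by simp [muDc]

/-- The rows of `λ̃` to the right of its `k × k` Durfee square. -/
def durfeeRight (n : Fin k → ℕ) (i : Fin k) : ℕ := n i + i + 1 - k

/-- The columns of `λ̃` below its `k × k` Durfee square. -/
def durfeeBelow (n : Fin k → ℕ) (j : Fin k) : ℕ := n j + j - k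

theorem muDc_add (c : ℕ) : muDc k n (k + c) = colLen (durfeeRight n) c := by
  rw [muDc, dif_neg (by omega), colLen]
  congr 1
  exact filter_congr fun j _ => by simp only [durfeeRight]; omega

theorem muD_add (t : ℕ) : muD k n (k + t) = colLen (durfeeBelow n) t := by
  rw [muD, dif_neg (by omega), colLen]
  congr 1
  exact filter_congr fun j _ => by simp only [durfeeBelow]; omega

theorem durfeeRight_antitone (hw : Antitone fun i : Fin k => n i + i) :
    Antitone (durfeeRight n) := fun _ _ hab => by
  have := hw hab
  simp only [durfeeRight] at this ⊢
  omega

theorem durfeeBelow_antitone (hw : Antitone fun i : Fin k => n i + i) :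
    Antitone (durfeeBelow n) := fun _ _ hab => by
  have := hw hab
  simp only [durfeeBelow] at this ⊢
  omega

theorem betaNum_durfeeRight (hle : ∀ i : Fin k, k ≤ n i + i) : betaNum (durfeeRight n) = n :=
  funext fun i => by
    have := hle i
    simp only [betaNum, durfeeRight]
    omega

theorem betaNum_durfeeBelow (hle : ∀ i : Fin k, k ≤ n i + i) :
    betaNum (durfeeBelow n) = fun i => n i - 1 :=
  funext fun i => by
    have := hle i
    have := i.isLt
    simp only [betaNum, durfeeBelow]
    omega

theorem le_muDc_zero (hle : ∀ i : Fin k, k ≤ n i + i) : k ≤ muDc k n 0 := by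
  rcases Nat.eq_zero_or_pos k with rfl | hk
  · exact le_rfl
  · simpa [muDc_val ⟨0, hk⟩] using hle ⟨0, hk⟩

theorem prod_hook_row_lt (hle : ∀ i : Fin k, k ≤ n i + i) (i : Fin k) :
    ∏ j ∈ range (muD k n i), (muD k n i + muDc k n j - i - j - 1) =
      (∏ j : Fin k, (n i + n j)) * ∏ c ∈ range (durfeeRight n i), hook (durfeeRight n) i c := by
  have hrow : muD k n i = k + durfeeRight n i := by
    rw [muD_val, durfeeRight]
    have := hle i
    omega
  rw [hrow, prod_range_add, ← Fin.prod_univ_eq_prod_range]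
  congr 1
  · refine prod_congr rfl fun j _ => ?_
    have := hle i
    rw [muDc_val, durfeeRight]
    omega
  · refine prod_congr rfl fun c _ => ?_
    have := hle i
    rw [muDc_add, hook, durfeeRight]
    omega

theorem prod_hook_rows_ge (hw : Antitone fun i : Fin k => n i + i)
    (hle : ∀ i : Fin k, k ≤ n i + i) :
    ∏ i ∈ Ico k (muDc k n 0), ∏ j ∈ range (muD k n i), (muD k n i + muDc k n j - i - j - 1) =
      hookProd (durfeeBelow n) := by
  have hbound : ∀ j, durfeeBelow n j ≤ muDc k n 0 - k := fun j => by
    have := hw (show (⟨0, j.pos⟩ : Fin k) ≤ j from Nat.zero_le _)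
    have := muDc_val (n := n) ⟨0, j.pos⟩
    simp only [durfeeBelow] at *
    omega
  rw [prod_Ico_eq_prod_range]
  simp_rw [muD_add]
  rw [prod_prod_range_colLen (durfeeBelow_antitone hw) hbound]
  refine prod_congr rfl fun j _ => prod_congr rfl fun t _ => ?_
  have := hle j
  rw [muDc_val, hook, durfeeBelow]
  omega

theorem hookProdDouble_eq (hw : Antitone fun i : Fin k => n i + i)
    (hle : ∀ i : Fin k, k ≤ n i + i) :
    hookProdDouble k n =
      (∏ i, ∏ j, (n i + n j)) * hookProd (durfeeRight n) * hookProd (durfeeBelow n) := by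
  rw [hookProdDouble, ← prod_range_mul_prod_Ico _ (le_muDc_zero hle), prod_hook_rows_ge hw hle,
    ← Fin.prod_univ_eq_prod_range, prod_congr rfl fun i _ => prod_hook_row_lt hle i,
    prod_mul_distrib]
  rfl

theorem hookProdDouble_mul_sq (hw : Antitone fun i : Fin k => n i + i)
    (hle : ∀ i : Fin k, k ≤ n i + i) (hpos : ∀ i, 0 < n i) :
    hookProdDouble k n * (∏ i, ∏ j ∈ Ioi i, (n i - n j)) ^ 2 =
      2 ^ k * ((∏ i, (n i)!) * ∏ i, ∏ j ∈ Ioi i, (n i + n j)) ^ 2 := by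
  have hright := hookProd_mul_prod_betaNum_sub (durfeeRight_antitone hw)
  have hbelow := hookProd_mul_prod_betaNum_sub (durfeeBelow_antitone hw)
  rw [betaNum_durfeeRight hle] at hright
  have hsub : ∀ i j, n i - 1 - (n j - 1) = n i - n j := fun i j => by
    have := hpos j
    omega
  simp only [betaNum_durfeeBelow hle, hsub] at hbelow
  have hdiag : ∏ i, (n i + n i) = 2 ^ k * ∏ i, n i := by
    simp [← two_mul, prod_mul_distrib]
  have hfact : (∏ i, n i) * ∏ i, (n i - 1)! = ∏ i, (n i)! := by
    rw [← prod_mul_distrib]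
    exact prod_congr rfl fun i _ => Nat.mul_factorial_pred (hpos i).ne'
  rw [hookProdDouble_eq hw hle, prod_prod_eq_prod_diag_mul_sq _ fun i j => add_comm _ _, hdiag]
  set Δ := ∏ i, ∏ j ∈ Ioi i, (n i - n j)
  calc _ = 2 ^ k * (∏ i, ∏ j ∈ Ioi i, (n i + n j)) ^ 2 *
        ((hookProd (durfeeRight n) * Δ) * ((∏ i, n i) * (hookProd (durfeeBelow n) * Δ))) := by
        ring
    _ = _ := by
        rw [hright, hbelow, hfact]
        ring

end Double

theorem HstarQ_eq {k : ℕ} {n : Fin k → ℕ} (hanti : StrictAnti n) :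
    HstarQ k n = (((∏ i, (n i)!) * ∏ i, ∏ j ∈ Ioi i, (n i + n j) : ℕ) : ℚ) /
      ((∏ i, ∏ j ∈ Ioi i, (n i - n j) : ℕ) : ℚ) := by
  rw [HstarQ, prod_filter_fst_lt_snd]
  simp only [Nat.cast_mul, Nat.cast_prod, Nat.cast_add, mul_div_assoc, ← prod_div_distrib]
  congr! 3 with i - j hj
  rw [Nat.cast_sub (hanti (mem_Ioi.1 hj)).le]

theorem antitone_add_val_of_strictAnti {k : ℕ} {n : Fin k → ℕ} (hanti : StrictAnti n) :
    Antitone fun i : Fin k => n i + i := by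
  intro i j hij
  have hmaps : Set.MapsTo n (Icc i j) (Icc (n j) (n i)) := fun x hx => by
    simp only [coe_Icc, Set.mem_Icc] at hx ⊢
    exact ⟨hanti.antitone hx.2, hanti.antitone hx.1⟩
  have := card_le_card_of_injOn n hmaps hanti.injective.injOn
  rw [Fin.card_Icc, Nat.card_Icc] at this
  have : (i : ℕ) ≤ j := hij
  show n j + j ≤ n i + i
  omega

theorem le_add_val_of_strictAnti {k : ℕ} {n : Fin k → ℕ} (hanti : StrictAnti n)
    (hpos : ∀ i, 0 < n i) (i : Fin k) : k ≤ n i + i := by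
  have hk : k - 1 < k := Nat.sub_one_lt_of_lt i.isLt
  have hlast := antitone_add_val_of_strictAnti hanti (show i ≤ ⟨k - 1, hk⟩ from
    Nat.le_sub_one_of_lt i.isLt)
  have := hpos ⟨k - 1, hk⟩
  simp only at hlast
  omega

/-- For a strict partition `λ` with `k` parts,
`H*_λ = 2^{−k/2} √(H_{λ̃})`, i.e. `(H*_λ)² · 2^k = H_{λ̃}`. -/
theorem shifted_hook_product_sq (k : ℕ) (n : Fin k → ℕ)
    (hanti : StrictAnti n) (hpos : ∀ i, 0 < n i) :
    (HstarQ k n) ^ 2 * 2 ^ k = (hookProdDouble k n : ℚ) := by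
  have hΔ : ((∏ i, ∏ j ∈ Ioi i, (n i - n j) : ℕ) : ℚ) ≠ 0 := by
    refine Nat.cast_ne_zero.2 (prod_pos fun i _ => prod_pos fun j hj => ?_).ne'
    exact Nat.sub_pos_of_lt (hanti (mem_Ioi.1 hj))
  rw [HstarQ_eq hanti, div_pow, div_mul_eq_mul_div, div_eq_iff (pow_ne_zero 2 hΔ)]
  exact_mod_cast (mul_comm _ _).trans (hookProdDouble_mul_sq
    (antitone_add_val_of_strictAnti hanti) (le_add_val_of_strictAnti hanti hpos) hpos).symm
end

section
/- Schur's Pfaffian identity: for an even number N of variables, Pfaff( (x_i − x_j)/(x_i + x_j) )_{1≤i,j≤N} = ∏_{1≤i<j≤N} (x_i − x_j)/(x_i + x_j). -/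
/-- The Pfaffian of a `2m × 2m` matrix (over a characteristic-zero field), via the
standard formula `Pf(A) = (2^m m!)⁻¹ Σ_σ sgn(σ) ∏ᵢ A_{σ(2i) σ(2i+1)}`; for
skew-symmetric `A` it is the canonical square root of `det A`, equal to the sum over
perfect matchings. -/
noncomputable def pfaffian {K : Type*} [Field K] [CharZero K] {m : ℕ}
    (A : Matrix (Fin (2 * m)) (Fin (2 * m)) K) : K :=
  (((2 ^ m * m.factorial : ℕ) : K))⁻¹ *
    ∑ σ : Equiv.Perm (Fin (2 * m)),
      ((Equiv.Perm.sign σ : ℤ) : K) *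
        ∏ i : Fin m,
          A (σ ⟨2 * (i : ℕ), by have := i.2; omega⟩)
            (σ ⟨2 * (i : ℕ) + 1, by have := i.2; omega⟩)

/-!
Write `r(u, v) = (u - v) / (u + v)`. Both sides are alternating in `x`, so both vanish unless the
`x i` are distinct. For distinct `x`, expanding the Pfaffian along the pair `(σ 0, σ 1)` and
inducting on `m` reduces the identity to the row expansion
`∑_b (-1)^b r(x_a, x_b) ∏_{i<j; i,j ∉ {a,b}} r(x_i, x_j) = (-1)^a ∏_{i<j} r(x_i, x_j)`.
Dividing by the right-hand side, this is the rational identity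
`∑_b r(z, y_b) ∏_{j ≠ b} r(y_b, y_j)⁻¹ = ∏_k r(z, y_k)` for an odd number of distinct `y_k`.
It follows from the partial fraction expansion of `∏_k (z - y_k) / (z + y_k)` in `z`
(Lagrange interpolation at the nodes `-y_k`), used once at `z` and once at `z = 0`.
-/

open Finset Equiv Polynomial

section Perm

variable {n : ℕ}

def permCons (a : Fin (n + 1)) (τ : Perm (Fin n)) : Perm (Fin (n + 1)) :=
  a.cycleRange.symm * Perm.decomposeFin.symm (0, τ)

@[simp]
lemma permCons_zero (a : Fin (n + 1)) (τ : Perm (Fin n)) : permCons a τ 0 = a := by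
  simp [permCons]

@[simp]
lemma permCons_succ (a : Fin (n + 1)) (τ : Perm (Fin n)) (k : Fin n) :
    permCons a τ k.succ = a.succAbove (τ k) := by
  simp [permCons, Perm.decomposeFin_symm_apply_succ]

lemma sign_permCons (a : Fin (n + 1)) (τ : Perm (Fin n)) :
    Perm.sign (permCons a τ) = (-1) ^ (a : ℕ) * Perm.sign τ := by
  simp [permCons, Perm.decomposeFin.symm_sign]

lemma permCons_injective :
    Function.Injective fun p : Fin (n + 1) × Perm (Fin n) => permCons p.1 p.2 := by
  rintro ⟨a, τ⟩ ⟨a', τ'⟩ h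
  obtain rfl : a = a' := by simpa using congr($h 0)
  refine Prod.ext rfl (Equiv.ext fun k => Fin.succAbove_right_injective (p := a) ?_)
  simpa using congr($h k.succ)

lemma Fintype.sum_perm_fin_succ {M : Type*} [AddCommMonoid M] (F : Perm (Fin (n + 1)) → M) :
    ∑ σ, F σ = ∑ a, ∑ τ, F (permCons a τ) := by
  have hbij : Function.Bijective fun p : Fin (n + 1) × Perm (Fin n) => permCons p.1 p.2 :=
    (Fintype.bijective_iff_injective_and_card _).2
      ⟨permCons_injective, by simp [Fintype.card_perm, Nat.factorial_succ]⟩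
  rw [← Fintype.sum_prod_type']
  exact (Fintype.sum_bijective _ hbij _ _ fun _ => rfl).symm

lemma Fin.prod_erase_eq_prod_succAbove {M : Type*} [CommMonoid M] (f : Fin (n + 1) → M)
    (b : Fin (n + 1)) : ∏ j ∈ univ.erase b, f j = ∏ k, f (b.succAbove k) := by
  rw [← compl_singleton, ← Fin.image_succAbove_univ,
    prod_image Fin.succAbove_right_injective.injOn]

end Perm

section PfaffSum

variable {R : Type*} [CommRing R] {m : ℕ}

def pfaffFst (i : Fin m) : Fin (2 * m) := ⟨2 * i, by omega⟩

def pfaffSnd (i : Fin m) : Fin (2 * m) := ⟨2 * i + 1, by omega⟩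

lemma pfaffFst_zero : (pfaffFst (0 : Fin (m + 1)) : Fin (2 * m + 2)) = 0 := rfl

lemma pfaffSnd_zero : (pfaffSnd (0 : Fin (m + 1)) : Fin (2 * m + 2)) = Fin.succ 0 := rfl

lemma pfaffFst_succ (i : Fin m) : (pfaffFst i.succ : Fin (2 * m + 2)) = (pfaffFst i).succ.succ := by
  ext; simp [pfaffFst]; omega

lemma pfaffSnd_succ (i : Fin m) : (pfaffSnd i.succ : Fin (2 * m + 2)) = (pfaffSnd i).succ.succ := by
  ext; simp [pfaffSnd]; omega

def pfaffSum (A : Matrix (Fin (2 * m)) (Fin (2 * m)) R) : R :=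
  ∑ σ : Perm (Fin (2 * m)), ((Perm.sign σ : ℤ) : R) * ∏ i, A (σ (pfaffFst i)) (σ (pfaffSnd i))

lemma pfaffSum_submatrix (A : Matrix (Fin (2 * m)) (Fin (2 * m)) R) (τ : Perm (Fin (2 * m))) :
    pfaffSum (A.submatrix τ τ) = Perm.sign τ * pfaffSum A := by
  rw [pfaffSum, pfaffSum, mul_sum]
  refine Fintype.sum_equiv (Equiv.mulLeft τ) _ _ fun σ => ?_
  rw [coe_mulLeft, Perm.sign_mul, ← mul_assoc, Units.val_mul, Int.cast_mul, ← mul_assoc,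
    ← Int.cast_mul, ← Units.val_mul, Int.units_mul_self]
  simp

lemma pfaffSum_eq_zero_of_submatrix_swap [IsAddTorsionFree R]
    {A : Matrix (Fin (2 * m)) (Fin (2 * m)) R} {i j : Fin (2 * m)} (hij : i ≠ j)
    (hA : A.submatrix (swap i j) (swap i j) = A) : pfaffSum A = 0 := by
  have h := pfaffSum_submatrix A (swap i j)
  rw [hA, Perm.sign_swap hij] at h
  exact self_eq_neg.1 (by simpa using h)

lemma pfaffSum_succ (A : Matrix (Fin (2 * m + 2)) (Fin (2 * m + 2)) R) :
    pfaffSum (m := m + 1) A = ∑ a : Fin (2 * m + 2), ∑ b : Fin (2 * m + 1),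
      (-1) ^ (a : ℕ) * (-1) ^ (b : ℕ) * A a (a.succAbove b) *
        pfaffSum (A.submatrix (a.succAbove ∘ b.succAbove) (a.succAbove ∘ b.succAbove)) := by
  refine (Fintype.sum_perm_fin_succ (n := 2 * m + 1) _).trans (sum_congr rfl fun a _ => ?_)
  rw [Fintype.sum_perm_fin_succ]
  refine sum_congr rfl fun b _ => ?_
  rw [pfaffSum, mul_sum]
  refine sum_congr rfl fun ρ _ => ?_
  simp only [sign_permCons, Fin.prod_univ_succ, pfaffFst_zero, pfaffSnd_zero, pfaffFst_succ,
    pfaffSnd_succ, permCons_zero, permCons_succ, Matrix.submatrix_apply, Function.comp_apply]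
  push_cast
  ring

end PfaffSum

section Schur

variable {K : Type*} [Field K]

def schurRatio (u v : K) : K := (u - v) / (u + v)

lemma schurRatio_swap (u v : K) : schurRatio v u = -schurRatio u v := by
  rw [schurRatio, schurRatio, add_comm, ← neg_div, neg_sub]

section PartialFractions

variable {ι : Type*} [Fintype ι] [DecidableEq ι] {y : ι → K}

lemma prod_schurRatio_eq_one_sub_sum (hy : Function.Injective y) {z : K}
    (hz : ∀ i, z + y i ≠ 0) :
    ∏ i, schurRatio z (y i) =
      1 - ∑ i, 2 * y i / (z + y i) * ∏ j ∈ univ.erase i, (schurRatio (y i) (y j))⁻¹ := by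
  -- `∏ (X - y i) - ∏ (X + y i)` has degree `< card ι`, so it equals its Lagrange interpolant at
  -- the nodes `-y i`; dividing the barycentric formula by `∏ (z + y i)` gives the expansion.
  set f : K[X] := Lagrange.nodal univ y - Lagrange.nodal univ (-y)
  have hv : Set.InjOn (-y) (univ : Finset ι) := fun i _ j _ h => hy (neg_injective h)
  have hdeg : f.degree < #(univ : Finset ι) := by
    rw [← Lagrange.degree_nodal (v := y) (s := univ)]
    exact degree_sub_lt_left (by simp [Lagrange.degree_nodal]) Lagrange.nodal_monic.ne_zero
      (by rw [Lagrange.nodal_monic.leadingCoeff, Lagrange.nodal_monic.leadingCoeff])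
  have key := Lagrange.eval_interpolate_not_at_node (fun i => f.eval ((-y) i))
    (s := univ) (v := -y) (x := z) (fun i _ h => hz i (by simp [h]))
  rw [← Lagrange.eq_interpolate hv hdeg] at key
  simp only [f, eval_sub, Lagrange.eval_nodal_at_node (mem_univ _), sub_zero] at key
  simp only [Lagrange.eval_nodal, Pi.neg_apply, sub_neg_eq_add] at key
  have hterm : ∀ i, Lagrange.nodalWeight univ (-y) i * (z + y i)⁻¹ * ∏ k, (-y i - y k) =
      -(2 * y i / (z + y i) * ∏ j ∈ univ.erase i, (schurRatio (y i) (y j))⁻¹) := by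
    intro i
    have hpair : (∏ j ∈ univ.erase i, (-y i - -y j)⁻¹) * ∏ j ∈ univ.erase i, (-y i - y j) =
        ∏ j ∈ univ.erase i, (schurRatio (y i) (y j))⁻¹ := by
      rw [← prod_mul_distrib]
      refine prod_congr rfl fun j _ => ?_
      rw [schurRatio, inv_div, show -y i - -y j = -(y i - y j) by ring,
        show -y i - y j = -(y i + y j) by ring, inv_neg, neg_mul_neg, div_eq_inv_mul]
    rw [Lagrange.nodalWeight, ← mul_prod_erase _ _ (mem_univ i)]
    linear_combination (-2 * y i * (z + y i)⁻¹) * hpair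
  simp_rw [hterm, sum_neg_distrib] at key
  change ∏ i, (z - y i) / (z + y i) = _
  rw [prod_div_distrib, div_eq_iff (prod_ne_zero_iff.2 fun i _ => hz i)]
  linear_combination key

lemma sum_schurRatio_mul_prod_inv (hodd : Odd (Fintype.card ι)) (hy : Function.Injective y)
    (hsum : ∀ i j, y i + y j ≠ 0) {z : K} (hz : ∀ i, z + y i ≠ 0) :
    ∑ i, schurRatio z (y i) * ∏ j ∈ univ.erase i, (schurRatio (y i) (y j))⁻¹ =
      ∏ i, schurRatio z (y i) := by
  have hy0 : ∀ i, y i ≠ 0 := fun i h => hsum i i (by rw [h, add_zero])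
  obtain ⟨i₀⟩ : Nonempty ι := Fintype.card_pos_iff.1 hodd.pos
  have h2 : (2 : K) ≠ 0 := fun h => hsum i₀ i₀ (by rw [← two_mul, h, zero_mul])
  -- At `z = 0` every ratio is `-1`, and `card ι` is odd.
  have hweights : ∑ i, ∏ j ∈ univ.erase i, (schurRatio (y i) (y j))⁻¹ = 1 := by
    have h0 := prod_schurRatio_eq_one_sub_sum hy (z := 0) (by simpa using hy0)
    have hratio : ∀ i, schurRatio 0 (y i) = -1 := fun i => by
      rw [schurRatio, zero_sub, zero_add, neg_div, div_self (hy0 i)]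
    simp only [hratio, prod_const, card_univ, hodd.neg_one_pow, zero_add, mul_div_assoc,
      div_self (hy0 _), mul_one, ← mul_sum] at h0
    exact mul_left_cancel₀ h2 (by linear_combination h0)
  have hsplit : ∀ i, schurRatio z (y i) = 1 - 2 * y i / (z + y i) := fun i => by
    rw [schurRatio]
    field_simp [hz i]
    ring
  rw [prod_schurRatio_eq_one_sub_sum hy hz]
  simp_rw [hsplit, sub_mul, one_mul, sum_sub_distrib, hweights]

end PartialFractions

section SchurProd

variable {n : ℕ}

def schurProd (x : Fin n → K) : K := ∏ i, ∏ j ∈ Ioi i, schurRatio (x i) (x j)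

lemma schurProd_eq_prod_filter_lt (x : Fin n → K) :
    schurProd x = ∏ p ∈ univ.filter (fun p : Fin n × Fin n => p.1 < p.2),
      (x p.1 - x p.2) / (x p.1 + x p.2) := by
  simp_rw [schurProd, prod_filter, Fintype.prod_prod_type, ← prod_filter, filter_lt_eq_Ioi,
    schurRatio]

lemma schurProd_eq_zero_of_lt {x : Fin n → K} {i j : Fin n} (hij : i < j) (h : x i = x j) :
    schurProd x = 0 :=
  prod_eq_zero (mem_univ i) (prod_eq_zero (mem_Ioi.2 hij) (by simp [schurRatio, h]))

lemma schurProd_comp_perm (x : Fin n → K) (σ : Perm (Fin n)) :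
    schurProd (x ∘ σ) = Perm.sign σ * schurProd x :=
  σ.prod_Ioi_comp_eq_sign_mul_prod (f := fun i j => schurRatio (x i) (x j))
    fun i j => schurRatio_swap (x j) (x i)

lemma schurProd_cons (z : K) (y : Fin n → K) :
    schurProd (Fin.cons z y : Fin (n + 1) → K) = (∏ k, schurRatio z (y k)) * schurProd y := by
  simp [schurProd, Fin.prod_univ_succ]

lemma schurProd_eq_neg_one_pow_mul (x : Fin (n + 1) → K) (a : Fin (n + 1)) :
    schurProd x = (-1) ^ (a : ℕ) *
      ((∏ k, schurRatio (x a) (x (a.succAbove k))) * schurProd (x ∘ a.succAbove)) := by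
  have h := schurProd_comp_perm x a.cycleRange.symm
  rw [← Fin.cons_removeNth_eq_comp_cycleRange_symm, schurProd_cons, Perm.sign_symm,
    Fin.sign_cycleRange] at h
  change (∏ k, schurRatio (x a) (x (a.succAbove k))) * schurProd (x ∘ a.succAbove) = _ at h
  rw [h]
  push_cast
  rw [← mul_assoc, ← mul_pow]
  norm_num

lemma sum_neg_one_pow_mul_schurProd (hn : Even n) {x : Fin (n + 2) → K}
    (hinj : Function.Injective x) (hsum : ∀ i j, x i + x j ≠ 0) (a : Fin (n + 2)) :
    ∑ b : Fin (n + 1), (-1) ^ (b : ℕ) * schurRatio (x a) (x (a.succAbove b)) *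
      schurProd (x ∘ a.succAbove ∘ b.succAbove) = (-1) ^ (a : ℕ) * schurProd x := by
  set y := x ∘ a.succAbove
  have hyinj : Function.Injective y := hinj.comp Fin.succAbove_right_injective
  have hterm : ∀ b : Fin (n + 1), (-1) ^ (b : ℕ) * schurProd (y ∘ b.succAbove) =
      (∏ j ∈ univ.erase b, (schurRatio (y b) (y j))⁻¹) * schurProd y := fun b => by
    have hne : ∏ k, schurRatio (y b) (y (b.succAbove k)) ≠ 0 := prod_ne_zero_iff.2 fun k _ =>
      div_ne_zero (sub_ne_zero.2 (hyinj.ne (Fin.succAbove_ne b k).symm)) (hsum _ _)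
    rw [prod_inv_distrib, Fin.prod_erase_eq_prod_succAbove, schurProd_eq_neg_one_pow_mul y b,
      mul_left_comm, inv_mul_cancel_left₀ hne]
  calc ∑ b : Fin (n + 1), (-1) ^ (b : ℕ) * schurRatio (x a) (y b) * schurProd (y ∘ b.succAbove)
      = ∑ b, schurRatio (x a) (y b) * (∏ j ∈ univ.erase b, (schurRatio (y b) (y j))⁻¹) *
          schurProd y := sum_congr rfl fun b _ => by rw [mul_right_comm, hterm]; ring
    _ = (∏ k, schurRatio (x a) (y k)) * schurProd y := by
      rw [← sum_mul, sum_schurRatio_mul_prod_inv (by simpa [Nat.odd_add_one] using hn) hyinj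
        (fun i j => hsum _ _) (fun i => hsum _ _)]
    _ = (-1) ^ (a : ℕ) * schurProd x := by
      rw [schurProd_eq_neg_one_pow_mul x a, ← mul_assoc, ← mul_pow, neg_one_mul, neg_neg,
        one_pow, one_mul]
      rfl

end SchurProd

def schurMatrix {ι : Type*} (x : ι → K) : Matrix ι ι K :=
  Matrix.of fun i j => schurRatio (x i) (x j)

lemma schurMatrix_submatrix {ι κ : Type*} (x : ι → K) (f : κ → ι) :
    (schurMatrix x).submatrix f f = schurMatrix (x ∘ f) := rfl

lemma pfaffSum_schurMatrix_of_injective {m : ℕ} {x : Fin (2 * m) → K}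
    (hinj : Function.Injective x) (hsum : ∀ i j, x i + x j ≠ 0) :
    pfaffSum (schurMatrix x) = ((2 ^ m * m.factorial : ℕ) : K) * schurProd x := by
  induction m with
  | zero => simp [pfaffSum, schurProd]
  | succ m ih =>
    have hrow : ∀ a : Fin (2 * m + 2), ∑ b : Fin (2 * m + 1),
        (-1) ^ (a : ℕ) * (-1) ^ (b : ℕ) * schurMatrix x a (a.succAbove b) *
          pfaffSum ((schurMatrix x).submatrix (a.succAbove ∘ b.succAbove)
            (a.succAbove ∘ b.succAbove)) = ((2 ^ m * m.factorial : ℕ) : K) * schurProd x := by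
      intro a
      simp_rw [schurMatrix_submatrix, ih (hinj.comp (Fin.succAbove_right_injective.comp
        Fin.succAbove_right_injective)) fun i j => hsum _ _]
      calc _ = ((2 ^ m * m.factorial : ℕ) : K) * (-1) ^ (a : ℕ) * ∑ b : Fin (2 * m + 1),
            (-1) ^ (b : ℕ) * schurRatio (x a) (x (a.succAbove b)) *
              schurProd (x ∘ a.succAbove ∘ b.succAbove) := by
            rw [mul_sum]
            exact sum_congr rfl fun b _ => by rw [schurMatrix, Matrix.of_apply]; ring
        _ = ((2 ^ m * m.factorial : ℕ) : K) * schurProd x := by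
            rw [sum_neg_one_pow_mul_schurProd (even_two_mul m) hinj hsum a, mul_assoc,
              ← mul_assoc ((-1) ^ _), ← mul_pow]
            norm_num
    refine (pfaffSum_succ (schurMatrix x)).trans ?_
    rw [sum_congr rfl fun a _ => hrow a, sum_const, card_univ, Fintype.card_fin, nsmul_eq_mul]
    push_cast [pow_succ, Nat.factorial_succ]
    ring

lemma pfaffSum_schurMatrix [CharZero K] {m : ℕ} {x : Fin (2 * m) → K}
    (hsum : ∀ i j, x i + x j ≠ 0) :
    pfaffSum (schurMatrix x) = ((2 ^ m * m.factorial : ℕ) : K) * schurProd x := by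
  by_cases hinj : Function.Injective x
  · exact pfaffSum_schurMatrix_of_injective hinj hsum
  obtain ⟨i, j, hxij, hij⟩ := Function.not_injective_iff.1 hinj
  have hswap : x ∘ swap i j = x := by
    rw [comp_swap_eq_update, hxij, Function.update_eq_self, ← hxij, Function.update_eq_self]
  rw [pfaffSum_eq_zero_of_submatrix_swap hij (by rw [schurMatrix_submatrix, hswap]),
    hij.lt_or_gt.elim (schurProd_eq_zero_of_lt · hxij) (schurProd_eq_zero_of_lt · hxij.symm),
    mul_zero]

end Schur

/-- **Schur's Pfaffian identity.** For an even number `N = 2m` of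
variables, `Pfaff((xᵢ−xⱼ)/(xᵢ+xⱼ)) = ∏_{i<j} (xᵢ−xⱼ)/(xᵢ+xⱼ)`. -/
theorem schur_pfaffian_identity {K : Type*} [Field K] [CharZero K] (m : ℕ)
    (x : Fin (2 * m) → K) (hx : ∀ i j, x i + x j ≠ 0) :
    pfaffian (Matrix.of fun i j => (x i - x j) / (x i + x j))
      = ∏ p ∈ Finset.univ.filter (fun p : Fin (2 * m) × Fin (2 * m) => p.1 < p.2),
          (x p.1 - x p.2) / (x p.1 + x p.2) := by
  change ((2 ^ m * m.factorial : ℕ) : K)⁻¹ * pfaffSum (schurMatrix x) = _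
  have hc : ((2 ^ m * m.factorial : ℕ) : K) ≠ 0 := Nat.cast_ne_zero.2 (by positivity)
  rw [pfaffSum_schurMatrix hx, inv_mul_cancel_left₀ hc, schurProd_eq_prod_filter_lt]
end
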